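/- arXiv:2207.05659 — 2 statements merged into one kernel-verified Lean document; each statement's English description precedes it below -/
import Mathlib

section
/- Let d⃗₁, d⃗₂, e⃗₁, e⃗₂ ∈ ℝ^k be such that |d⃗₁[1] − e⃗₁[1]| ≤ δ₁, |d⃗₂[1] − e⃗₂[1]| ≤ δ₁, and for all 2 ≤ j ≤ k, |d⃗₁[j] − e⃗₁[j]| ≤ δ₂ and |d⃗₂[j] − e⃗₂[j]| ≤ δ₂. Define ‖d⃗, e⃗‖ = min_{i∈[k]} (d⃗^≤[i] + e⃗^≤[i]) where d⃗^≤[i] = Σ_{j=1}^{i} d⃗[j]. Then |‖d⃗₁, d⃗₂‖ − ‖e⃗₁, e⃗₂‖| ≤ 2δ₁ + 2(k−1)δ₂. -/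
lemma abs_inf'_sub_inf' {s : Finset ℕ} (hs : s.Nonempty) (f g : ℕ → ℝ) (c : ℝ)
    (h : ∀ i ∈ s, |f i - g i| ≤ c) :
    |s.inf' hs f - s.inf' hs g| ≤ c := by
  rw [abs_sub_le_iff]
  constructor
  · obtain ⟨i, hi, hgi⟩ := s.exists_mem_eq_inf' hs g
    have h1 : s.inf' hs f ≤ f i := Finset.inf'_le _ hi
    have h2 : f i - g i ≤ c := (abs_sub_le_iff.mp (h i hi)).1
    rw [hgi]; linarith
  · obtain ⟨i, hi, hfi⟩ := s.exists_mem_eq_inf' hs f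
    have h1 : s.inf' hs g ≤ g i := Finset.inf'_le _ hi
    have h2 : g i - f i ≤ c := (abs_sub_le_iff.mp (h i hi)).2
    rw [hfi]; linarith

lemma sum_abs_bound (k : ℕ) (δ₁ δ₂ : ℝ) (d e : ℕ → ℝ)
    (h1 : |d 1 - e 1| ≤ δ₁) (h2 : ∀ j, 2 ≤ j → j ≤ k → |d j - e j| ≤ δ₂)
    (i : ℕ) (hi1 : 1 ≤ i) (hik : i ≤ k) :
    |(∑ j ∈ Finset.Icc 1 i, d j) - ∑ j ∈ Finset.Icc 1 i, e j|
      ≤ δ₁ + ((k : ℝ) - 1) * δ₂ := by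
  rw [← Finset.sum_sub_distrib]
  have hsplit : Finset.Icc 1 i = insert 1 (Finset.Icc 2 i) := by
    ext j; simp only [Finset.mem_Icc, Finset.mem_insert]; omega
  rw [hsplit, Finset.sum_insert (by simp)]
  calc |d 1 - e 1 + ∑ j ∈ Finset.Icc 2 i, (d j - e j)|
      ≤ |d 1 - e 1| + |∑ j ∈ Finset.Icc 2 i, (d j - e j)| := abs_add_le _ _
    _ ≤ δ₁ + ((k : ℝ) - 1) * δ₂ := by
        gcongr
        calc |∑ j ∈ Finset.Icc 2 i, (d j - e j)|
            ≤ ∑ j ∈ Finset.Icc 2 i, |d j - e j| := Finset.abs_sum_le_sum_abs _ _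
          _ ≤ ∑ j ∈ Finset.Icc 2 i, δ₂ := by
              apply Finset.sum_le_sum
              intro j hj
              simp only [Finset.mem_Icc] at hj
              exact h2 j hj.1 (hj.2.trans hik)
          _ = ((i : ℝ) - 1) * δ₂ := by
              rw [Finset.sum_const, Nat.card_Icc, nsmul_eq_mul]
              have h' : ((i + 1 - 2 : ℕ) : ℝ) = (i : ℝ) - 1 := by
                have : i + 1 - 2 = i - 1 := by omega
                rw [this, Nat.cast_sub hi1]; simp
              rw [h']
          _ ≤ ((k : ℝ) - 1) * δ₂ := by
              rcases eq_or_lt_of_le hi1 with h | h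
              · rcases eq_or_lt_of_le hik with h' | h'
                · rw [h']
                · have hk2 : 2 ≤ k := by omega
                  have hδ₂ : 0 ≤ δ₂ := (abs_nonneg _).trans (h2 2 le_rfl hk2)
                  have : (i : ℝ) ≤ (k : ℝ) := by exact_mod_cast hik
                  nlinarith
              · have hk2 : 2 ≤ k := by omega
                have hδ₂ : 0 ≤ δ₂ := (abs_nonneg _).trans (h2 2 le_rfl hk2)
                have : (i : ℝ) ≤ (k : ℝ) := by exact_mod_cast hik
                nlinarith

/-- Lemma 3.9: if two pairs of encodings agree up to δ₁ on the first coordinate and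
up to δ₂ on the remaining coordinates, then their encoding distances
‖d⃗₁, d⃗₂‖ = min_i (d⃗₁^≤[i] + d⃗₂^≤[i]) differ by at most 2δ₁ + 2(k−1)δ₂. -/
theorem encoding_dist_approx (k : ℕ) (hk : 1 ≤ k) (δ₁ δ₂ : ℝ) (d₁ d₂ e₁ e₂ : ℕ → ℝ)
    (h11 : |d₁ 1 - e₁ 1| ≤ δ₁) (h21 : |d₂ 1 - e₂ 1| ≤ δ₁)
    (h12 : ∀ j, 2 ≤ j → j ≤ k → |d₁ j - e₁ j| ≤ δ₂)
    (h22 : ∀ j, 2 ≤ j → j ≤ k → |d₂ j - e₂ j| ≤ δ₂) :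
    |(Finset.Icc 1 k).inf' (Finset.nonempty_Icc.mpr hk)
        (fun i => (∑ j ∈ Finset.Icc 1 i, d₁ j) + ∑ j ∈ Finset.Icc 1 i, d₂ j) -
      (Finset.Icc 1 k).inf' (Finset.nonempty_Icc.mpr hk)
        (fun i => (∑ j ∈ Finset.Icc 1 i, e₁ j) + ∑ j ∈ Finset.Icc 1 i, e₂ j)|
      ≤ 2 * δ₁ + 2 * ((k : ℝ) - 1) * δ₂ := by
  apply abs_inf'_sub_inf'
  intro i hi
  simp only [Finset.mem_Icc] at hi
  have b1 := sum_abs_bound k δ₁ δ₂ d₁ e₁ h11 h12 i hi.1 hi.2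
  have b2 := sum_abs_bound k δ₁ δ₂ d₂ e₂ h21 h22 i hi.1 hi.2
  have : |(∑ j ∈ Finset.Icc 1 i, d₁ j) + (∑ j ∈ Finset.Icc 1 i, d₂ j) -
      ((∑ j ∈ Finset.Icc 1 i, e₁ j) + ∑ j ∈ Finset.Icc 1 i, e₂ j)|
      ≤ |(∑ j ∈ Finset.Icc 1 i, d₁ j) - ∑ j ∈ Finset.Icc 1 i, e₁ j| +
        |(∑ j ∈ Finset.Icc 1 i, d₂ j) - ∑ j ∈ Finset.Icc 1 i, e₂ j| := by
    have := abs_add_le ((∑ j ∈ Finset.Icc 1 i, d₁ j) - ∑ j ∈ Finset.Icc 1 i, e₁ j)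
      ((∑ j ∈ Finset.Icc 1 i, d₂ j) - ∑ j ∈ Finset.Icc 1 i, e₂ j)
    convert this using 1
    congr 1; ring
  linarith
end

section
/- Let d⃗_u, d⃗_v, d⃗₁, d⃗₂ ∈ ℝ^k with d⃗₁[1] = d⃗_u[1], d⃗₂[1] = d⃗_v[1], and |d⃗₁[j] − d⃗_u[j]| ≤ 2kδ, |d⃗₂[j] − d⃗_v[j]| ≤ 2kδ for all 2 ≤ j ≤ k. Suppose moreover that D ∈ ℝ satisfies |min_{i∈[k]}(d⃗_u^≤[i] + d⃗_v^≤[i]) − D| ≤ 2kδ + 2τ. Then |min_{i∈[k]}(d⃗₁^≤[i] + d⃗₂^≤[i]) − D| ≤ (4k² − 2k)δ + 2τ. -/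
open Finset

/-- Prefix sums of close vectors are close. -/
lemma prefix_close (k i : ℕ) (hi1 : 1 ≤ i) (hik : i ≤ k) (δ : ℝ) (hδ : 0 ≤ δ)
    (a b : ℕ → ℝ) (hab1 : a 1 = b 1)
    (hab : ∀ j, 2 ≤ j → j ≤ k → |a j - b j| ≤ 2 * (k : ℝ) * δ) :
    |∑ j ∈ Icc 1 i, a j - ∑ j ∈ Icc 1 i, b j|
      ≤ ((k : ℝ) - 1) * (2 * (k : ℝ) * δ) := by
  rw [← Finset.sum_sub_distrib]
  have hins : Icc 1 i = insert 1 (Icc 2 i) := by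
    rw [show (2:ℕ) = 1 + 1 from rfl, Finset.Icc_add_one_left_eq_Ioc]
    exact (Finset.Ioc_insert_left hi1).symm
  rw [hins, Finset.sum_insert (by simp), show a 1 - b 1 = 0 by rw [hab1]; ring, zero_add]
  have hc : (Icc 2 i).card ≤ k - 1 := by rw [Nat.card_Icc]; omega
  have hcr : ((Icc 2 i).card : ℝ) ≤ (k : ℝ) - 1 := by
    calc ((Icc 2 i).card : ℝ) ≤ ((k - 1 : ℕ) : ℝ) := by exact_mod_cast hc
      _ = (k : ℝ) - 1 := by
          have h1k : 1 ≤ k := le_trans hi1 hik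
          push_cast [h1k]; ring
  calc |∑ j ∈ Icc 2 i, (a j - b j)| ≤ ∑ j ∈ Icc 2 i, |a j - b j| :=
        Finset.abs_sum_le_sum_abs _ _
    _ ≤ ∑ _j ∈ Icc 2 i, 2 * (k : ℝ) * δ := by
        refine Finset.sum_le_sum fun j hj => ?_
        rw [Finset.mem_Icc] at hj
        exact hab j hj.1 (le_trans hj.2 hik)
    _ = ((Icc 2 i).card : ℝ) * (2 * (k : ℝ) * δ) := by rw [Finset.sum_const, nsmul_eq_mul]
    _ ≤ ((k : ℝ) - 1) * (2 * (k : ℝ) * δ) := by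
        apply mul_le_mul_of_nonneg_right hcr
        positivity

/-- Stretch computation of Lemma 3.17: if encodings d⃗₁, d⃗₂ agree with d⃗_u, d⃗_v on
the first coordinate and are within 2kδ on the remaining coordinates, and the
encoding distance of d⃗_u, d⃗_v is within 2kδ + 2τ of D, then the encoding distance
of d⃗₁, d⃗₂ is within (4k² − 2k)δ + 2τ of D. -/
theorem stretch_computation (k : ℕ) (hk : 1 ≤ k) (δ τ D : ℝ) (hδ : 0 ≤ δ) (hτ : 0 ≤ τ)
    (du dv d₁ d₂ : ℕ → ℝ)
    (h1 : d₁ 1 = du 1) (h2 : d₂ 1 = dv 1)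
    (h1' : ∀ j, 2 ≤ j → j ≤ k → |d₁ j - du j| ≤ 2 * (k : ℝ) * δ)
    (h2' : ∀ j, 2 ≤ j → j ≤ k → |d₂ j - dv j| ≤ 2 * (k : ℝ) * δ)
    (hD : |(Finset.Icc 1 k).inf' (Finset.nonempty_Icc.mpr hk)
        (fun i => (∑ j ∈ Finset.Icc 1 i, du j) + ∑ j ∈ Finset.Icc 1 i, dv j) - D|
        ≤ 2 * (k : ℝ) * δ + 2 * τ) :
    |(Finset.Icc 1 k).inf' (Finset.nonempty_Icc.mpr hk)
        (fun i => (∑ j ∈ Finset.Icc 1 i, d₁ j) + ∑ j ∈ Finset.Icc 1 i, d₂ j) - D|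
      ≤ (4 * (k : ℝ) ^ 2 - 2 * (k : ℝ)) * δ + 2 * τ := by
  set ne := Finset.nonempty_Icc.mpr hk
  set f := fun i => (∑ j ∈ Finset.Icc 1 i, du j) + ∑ j ∈ Finset.Icc 1 i, dv j with hf
  set g := fun i => (∑ j ∈ Finset.Icc 1 i, d₁ j) + ∑ j ∈ Finset.Icc 1 i, d₂ j with hg
  have key : ∀ i ∈ Icc 1 k, |g i - f i| ≤ 2 * (((k : ℝ) - 1) * (2 * (k : ℝ) * δ)) := by
    intro i hi
    rw [Finset.mem_Icc] at hi
    have h₁ := prefix_close k i hi.1 hi.2 δ hδ d₁ du h1 h1'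
    have h₂ := prefix_close k i hi.1 hi.2 δ hδ d₂ dv h2 h2'
    calc |g i - f i| = |(∑ j ∈ Icc 1 i, d₁ j - ∑ j ∈ Icc 1 i, du j)
          + (∑ j ∈ Icc 1 i, d₂ j - ∑ j ∈ Icc 1 i, dv j)| := by simp [hf, hg]; ring_nf
      _ ≤ _ := by
          have := abs_add_le (∑ j ∈ Icc 1 i, d₁ j - ∑ j ∈ Icc 1 i, du j)
            (∑ j ∈ Icc 1 i, d₂ j - ∑ j ∈ Icc 1 i, dv j)
          linarith
  -- |inf' g - inf' f| ≤ bound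
  have hinf : |(Icc 1 k).inf' ne g - (Icc 1 k).inf' ne f|
      ≤ 2 * (((k : ℝ) - 1) * (2 * (k : ℝ) * δ)) := by
    rw [abs_sub_le_iff]
    constructor
    · obtain ⟨i, hi, hie⟩ := Finset.exists_mem_eq_inf' ne f
      have h1 : (Icc 1 k).inf' ne g ≤ g i := Finset.inf'_le _ hi
      have := key i hi
      rw [abs_le] at this
      linarith [hie]
    · obtain ⟨i, hi, hie⟩ := Finset.exists_mem_eq_inf' ne g
      have h1 : (Icc 1 k).inf' ne f ≤ f i := Finset.inf'_le _ hi
      have := key i hi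
      rw [abs_le] at this
      linarith [hie]
  have hkk : (1 : ℝ) ≤ (k : ℝ) := by exact_mod_cast hk
  have habs : |(Icc 1 k).inf' ne g - D| ≤ |(Icc 1 k).inf' ne g - (Icc 1 k).inf' ne f|
      + |(Icc 1 k).inf' ne f - D| := abs_sub_le _ _ _
  calc |(Icc 1 k).inf' ne g - D| ≤ _ := habs
    _ ≤ 2 * (((k : ℝ) - 1) * (2 * (k : ℝ) * δ)) + (2 * (k : ℝ) * δ + 2 * τ) := by
        exact add_le_add hinf hD
    _ ≤ (4 * (k : ℝ) ^ 2 - 2 * (k : ℝ)) * δ + 2 * τ := by nlinarith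
end
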